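/- arXiv:1801.04517 — 4 statements merged into one kernel-verified Lean document; each statement's English description precedes it below -/
import Mathlib

section
/- Let 0 < η < 1 and let δ : [0,∞) → [0,∞) be continuously differentiable with δ'(t) ≤ η for all t ≥ 0, and let Δ > 0. Then for every integer a, the number of indices j ∈ {0,1,2,...} satisfying j − ⌊δ(jΔ)/Δ⌋ = a is at most ⌊(1−η)^{-1}⌋ + 1. -/
open Set

/-- For a delay `δ` with `δ' ≤ η < 1` and step size `Δ > 0`, for every integer `a`
the number of indices `j ∈ ℕ` with `j − ⌊δ(jΔ)/Δ⌋ = a` is at most `⌊(1−η)⁻¹⌋ + 1`. -/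
theorem delayed_index_fiber_card_le
    (η : ℝ) (hη0 : 0 < η) (hη1 : η < 1)
    (δ δ' : ℝ → ℝ)
    (hδ_nonneg : ∀ t, 0 ≤ t → 0 ≤ δ t)
    (hδ_deriv : ∀ t, 0 ≤ t → HasDerivAt δ (δ' t) t)
    (hδ'_cont : ContinuousOn δ' (Ici 0))
    (hδ'_le : ∀ t, 0 ≤ t → δ' t ≤ η)
    (Δ : ℝ) (hΔ : 0 < Δ) (a : ℤ) :
    {j : ℕ | (j : ℤ) - ⌊δ (j * Δ) / Δ⌋ = a}.Finite ∧
      {j : ℕ | (j : ℤ) - ⌊δ (j * Δ) / Δ⌋ = a}.ncard ≤ ⌊(1 - η)⁻¹⌋₊ + 1 := by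
  set S := {j : ℕ | (j : ℤ) - ⌊δ (j * Δ) / Δ⌋ = a} with hS
  have h1η : (0:ℝ) < 1 - η := by linarith
  -- f t = t - δ t grows at least as fast as (1-η) t
  set f : ℝ → ℝ := fun t => t - δ t with hf
  have hderiv : ∀ x ∈ interior (Ici (0:ℝ)), HasDerivAt f (1 - δ' x) x := by
    intro x hx
    rw [interior_Ici] at hx
    exact (hasDerivAt_id x).sub (hδ_deriv x hx.le)
  have hcont : ContinuousOn f (Ici (0:ℝ)) := by
    intro t ht
    exact (continuousAt_id.sub (hδ_deriv t ht).continuousAt).continuousWithinAt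
  have hdiff : DifferentiableOn ℝ f (interior (Ici (0:ℝ))) :=
    fun x hx => (hderiv x hx).differentiableAt.differentiableWithinAt
  have hge : ∀ x ∈ interior (Ici (0:ℝ)), 1 - η ≤ deriv f x := by
    intro x hx
    rw [(hderiv x hx).deriv]
    have : 0 ≤ x := le_of_lt (by rwa [interior_Ici] at hx)
    linarith [hδ'_le x this]
  have mvt := (convex_Ici (0:ℝ)).mul_sub_le_image_sub_of_le_deriv hcont hdiff hge
  -- key: any two fiber points are close
  have key : ∀ j j' : ℕ, j ∈ S → j' ∈ S → j < j' → ((j':ℝ) - j) < (1 - η)⁻¹ := by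
    intro j j' hj hj' hlt
    have hjm : (j:ℝ) * Δ ∈ Ici (0:ℝ) := mem_Ici.mpr (by positivity)
    have hj'm : (j':ℝ) * Δ ∈ Ici (0:ℝ) := mem_Ici.mpr (by positivity)
    have hle : (j:ℝ) * Δ ≤ (j':ℝ) * Δ := by
      have : (j:ℝ) ≤ j' := by exact_mod_cast hlt.le
      nlinarith
    have h1 := mvt ((j:ℝ) * Δ) hjm ((j':ℝ) * Δ) hj'm hle
    -- floor conditions
    have hj1 : ⌊δ (j * Δ) / Δ⌋ = (j:ℤ) - a := by
      have := hj; simp only [hS, mem_setOf_eq] at this; omega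
    have hj'1 : ⌊δ (j' * Δ) / Δ⌋ = (j':ℤ) - a := by
      have := hj'; simp only [hS, mem_setOf_eq] at this; omega
    have hb1 : δ ((j:ℝ) * Δ) / Δ < (j:ℝ) - a + 1 := by
      have := Int.lt_floor_add_one (δ ((j:ℝ) * Δ) / Δ)
      rw [hj1] at this; push_cast at this; linarith
    have hb2 : ((j':ℝ) - a) ≤ δ ((j':ℝ) * Δ) / Δ := by
      have := Int.floor_le (δ ((j':ℝ) * Δ) / Δ)
      rw [hj'1] at this; push_cast at this; linarith
    have hb1' : δ ((j:ℝ) * Δ) < ((j:ℝ) - a + 1) * Δ := by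
      rw [div_lt_iff₀ hΔ] at hb1; linarith
    have hb2' : ((j':ℝ) - a) * Δ ≤ δ ((j':ℝ) * Δ) := by
      rw [le_div_iff₀ hΔ] at hb2; linarith
    have hmain : (1 - η) * (((j':ℝ) - j) * Δ) < Δ := by
      simp only [hf] at h1; nlinarith
    have : (1 - η) * ((j':ℝ) - j) < 1 := by nlinarith
    nlinarith [mul_inv_cancel₀ h1η.ne']
  -- conclude
  rcases S.eq_empty_or_nonempty with he | hne
  · simp [he]
  obtain ⟨j₀, hj₀, hmin⟩ := Nat.lt_wfRel.wf.has_min S hne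
  set K := ⌊(1 - η)⁻¹⌋₊ with hK
  have hsub : S ⊆ Icc j₀ (j₀ + K) := by
    intro j hj
    have hj₀le : j₀ ≤ j := not_lt.mp (hmin j hj)
    refine ⟨hj₀le, ?_⟩
    rcases eq_or_lt_of_le hj₀le with rfl | hlt
    · omega
    · have hkey := key j₀ j hj₀ hj hlt
      have : ((j - j₀ : ℕ) : ℝ) ≤ (1 - η)⁻¹ := by
        push_cast [Nat.cast_sub hj₀le]; linarith
      have := Nat.le_floor this
      omega
  have hfin : S.Finite := (finite_Icc j₀ (j₀ + K)).subset hsub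
  refine ⟨hfin, ?_⟩
  calc S.ncard ≤ (Icc j₀ (j₀ + K)).ncard :=
        Set.ncard_le_ncard hsub (finite_Icc _ _)
    _ = K + 1 := by
        rw [← Finset.coe_Icc, Set.ncard_coe_finset, Nat.card_Icc]; omega
end

section
/- Fix t ≥ 0 and h > 0, and let K, λ₀, λ₁, λ₂ > 0. Let f : ℝⁿ × ℝⁿ × [0,∞) → ℝⁿ and g : ℝⁿ × ℝⁿ × [0,∞) → ℝ^{n×d} satisfy 2⟨x, f(x,y,t)⟩ + |g(x,y,t)|² ≤ ( K(1+t)^{−λ₀} − λ₁|x|² + λ₂|y|² ) / (1+t) for all x, y ∈ ℝⁿ. Define the truncated maps f_Δ(x,y,t) = f(x,y,t) and g_Δ(x,y,t) = g(x,y,t) if |x| ∨ |y| ≤ h, while f_Δ(x,y,t) = ((|x|∨|y|)/h) f( (h/(|x|∨|y|)) x, (h/(|x|∨|y|)) y, t ) and g_Δ(x,y,t) = ((|x|∨|y|)/h) g( (h/(|x|∨|y|)) x, (h/(|x|∨|y|)) y, t ) if |x| ∨ |y| > h. Then for all x, y ∈ ℝⁿ, 2⟨x, f_Δ(x,y,t)⟩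 + |g_Δ(x,y,t)|² ≤ ( K(1+t)^{−λ₀} − (λ₁ − K/h²)|x|² + (λ₂ + K/h²)|y|² ) / (1+t). -/
open scoped RealInnerProductSpace

/-- The Frobenius norm of an `n × d` real matrix, `|A| = √(trace(AᵀA))`. -/
noncomputable def frobNorm {n d : ℕ} (A : Matrix (Fin n) (Fin d) ℝ) : ℝ :=
  Real.sqrt (∑ i, ∑ j, (A i j) ^ 2)

lemma frob_sq {n d : ℕ} (A : Matrix (Fin n) (Fin d) ℝ) :
    frobNorm A ^ 2 = ∑ i, ∑ j, (A i j) ^ 2 :=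
  Real.sq_sqrt (by positivity)

lemma frob_smul_sq {n d : ℕ} (s : ℝ) (A : Matrix (Fin n) (Fin d) ℝ) :
    frobNorm (s • A) ^ 2 = s ^ 2 * frobNorm A ^ 2 := by
  rw [frob_sq, frob_sq, Finset.mul_sum]
  refine Finset.sum_congr rfl fun i _ => ?_
  rw [Finset.mul_sum]
  refine Finset.sum_congr rfl fun j _ => ?_
  simp [Matrix.smul_apply, mul_pow]

/-- The truncated coefficients `f_Δ, g_Δ` satisfy a perturbed dissipativity condition. -/
theorem truncated_map_dissipativity {n d : ℕ}
    (t : ℝ) (ht : 0 ≤ t) (h : ℝ) (hh : 0 < h)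
    (K lam₀ lam₁ lam₂ : ℝ) (hK : 0 < K) (hlam₀ : 0 < lam₀) (hlam₁ : 0 < lam₁) (hlam₂ : 0 < lam₂)
    (f : EuclideanSpace ℝ (Fin n) → EuclideanSpace ℝ (Fin n) → ℝ → EuclideanSpace ℝ (Fin n))
    (g : EuclideanSpace ℝ (Fin n) → EuclideanSpace ℝ (Fin n) → ℝ → Matrix (Fin n) (Fin d) ℝ)
    (hdiss : ∀ x y : EuclideanSpace ℝ (Fin n),
      2 * ⟪x, f x y t⟫ + (frobNorm (g x y t)) ^ 2 ≤
        (K * (1 + t) ^ (-lam₀) - lam₁ * ‖x‖ ^ 2 + lam₂ * ‖y‖ ^ 2) / (1 + t))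
    (fΔ : EuclideanSpace ℝ (Fin n) → EuclideanSpace ℝ (Fin n) → ℝ → EuclideanSpace ℝ (Fin n))
    (hfΔ : ∀ x y, fΔ x y t =
      if max ‖x‖ ‖y‖ ≤ h then f x y t
      else (max ‖x‖ ‖y‖ / h) • f ((h / max ‖x‖ ‖y‖) • x) ((h / max ‖x‖ ‖y‖) • y) t)
    (gΔ : EuclideanSpace ℝ (Fin n) → EuclideanSpace ℝ (Fin n) → ℝ → Matrix (Fin n) (Fin d) ℝ)
    (hgΔ : ∀ x y, gΔ x y t =
      if max ‖x‖ ‖y‖ ≤ h then g x y t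
      else (max ‖x‖ ‖y‖ / h) • g ((h / max ‖x‖ ‖y‖) • x) ((h / max ‖x‖ ‖y‖) • y) t) :
    ∀ x y : EuclideanSpace ℝ (Fin n),
      2 * ⟪x, fΔ x y t⟫ + (frobNorm (gΔ x y t)) ^ 2 ≤
        (K * (1 + t) ^ (-lam₀) - (lam₁ - K / h ^ 2) * ‖x‖ ^ 2
          + (lam₂ + K / h ^ 2) * ‖y‖ ^ 2) / (1 + t) := by
  intro x y
  have h1t : (0:ℝ) < 1 + t := by linarith
  have hh2 : (0:ℝ) < h ^ 2 := by positivity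
  have hKh : 0 ≤ K / h ^ 2 := by positivity
  have hx0 : (0:ℝ) ≤ ‖x‖ ^ 2 := sq_nonneg _
  have hy0 : (0:ℝ) ≤ ‖y‖ ^ 2 := sq_nonneg _
  rw [hfΔ, hgΔ]
  split_ifs with hc
  · refine le_trans (hdiss x y) ?_
    refine (div_le_div_iff_of_pos_right h1t).mpr ?_
    nlinarith
  · set m := max ‖x‖ ‖y‖ with hmdef
    have hm : h < m := lt_of_not_ge hc
    have hm0 : 0 < m := hh.trans hm
    have hc0 : 0 < h / m := by positivity
    have hs0 : 0 < m / h := by positivity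
    have hsc : (m / h) * (h / m) = 1 := by field_simp
    have hm2 : m ^ 2 ≤ ‖x‖ ^ 2 + ‖y‖ ^ 2 := by
      rcases max_cases ‖x‖ ‖y‖ with ⟨he, _⟩ | ⟨he, _⟩ <;> rw [hmdef, he] <;> nlinarith
    set P := (1 + t) ^ (-lam₀) with hPdef
    have hP0 : 0 < P := Real.rpow_pos_of_pos h1t _
    have hP1 : P ≤ 1 := Real.rpow_le_one_of_one_le_of_nonpos (by linarith) (by linarith)
    have hA := hdiss ((h / m) • x) ((h / m) • y)
    rw [norm_smul, norm_smul, Real.norm_eq_abs, abs_of_pos hc0] at hA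
    rw [real_inner_smul_left] at hA
    rw [real_inner_smul_right, frob_smul_sq]
    set F := ⟪x, f ((h / m) • x) ((h / m) • y) t⟫ with hF
    set G := frobNorm (g ((h / m) • x) ((h / m) • y) t) ^ 2 with hG
    have hG0 : 0 ≤ G := by rw [hG]; positivity
    have key : 2 * ((m / h) * F) + (m / h) ^ 2 * G ≤
        (m / h) ^ 2 * ((K * P - lam₁ * (h / m * ‖x‖) ^ 2 + lam₂ * (h / m * ‖y‖) ^ 2) / (1 + t)) := by
      have this' := mul_le_mul_of_nonneg_left hA (le_of_lt (by positivity : (0:ℝ) < (m / h) ^ 2))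
      have eq : (m / h) ^ 2 * (2 * (h / m * F) + G) = 2 * ((m / h) * F) + (m / h) ^ 2 * G := by
        linear_combination (2 * F * (m / h)) * hsc
      linarith [eq ▸ this']
    refine le_trans key ?_
    rw [← mul_div_assoc]
    refine (div_le_div_iff_of_pos_right h1t).mpr ?_
    have e1 : (m / h) ^ 2 * (h / m * ‖x‖) ^ 2 = ‖x‖ ^ 2 := by
      rw [mul_pow, ← mul_assoc, ← mul_pow, hsc]; ring
    have e2 : (m / h) ^ 2 * (h / m * ‖y‖) ^ 2 = ‖y‖ ^ 2 := by
      rw [mul_pow, ← mul_assoc, ← mul_pow, hsc]; ring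
    have hs2 : (m / h) ^ 2 = m ^ 2 / h ^ 2 := by rw [div_pow]
    have hm2h : m ^ 2 / h ^ 2 ≤ (‖x‖ ^ 2 + ‖y‖ ^ 2) / h ^ 2 := by gcongr
    have expand : (m / h) ^ 2 * (K * P - lam₁ * (h / m * ‖x‖) ^ 2 + lam₂ * (h / m * ‖y‖) ^ 2)
        = (m / h) ^ 2 * (K * P) - lam₁ * ‖x‖ ^ 2 + lam₂ * ‖y‖ ^ 2 := by
      linear_combination lam₂ * e2 - lam₁ * e1
    have step : (m / h) ^ 2 * (K * P) ≤ K * P + K / h ^ 2 * (‖x‖ ^ 2 + ‖y‖ ^ 2) := by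
      have h1 : (m / h) ^ 2 * (K * P) ≤ ((‖x‖ ^ 2 + ‖y‖ ^ 2) / h ^ 2) * (K * P) := by
        refine mul_le_mul_of_nonneg_right ?_ (by positivity)
        rw [div_pow]; exact hm2h
      have h2 : ((‖x‖ ^ 2 + ‖y‖ ^ 2) / h ^ 2) * (K * P) ≤ ((‖x‖ ^ 2 + ‖y‖ ^ 2) / h ^ 2) * K := by
        exact mul_le_mul_of_nonneg_left (mul_le_of_le_one_right hK.le hP1) (by positivity)
      have h3 : ((‖x‖ ^ 2 + ‖y‖ ^ 2) / h ^ 2) * K = K / h ^ 2 * (‖x‖ ^ 2 + ‖y‖ ^ 2) := by ring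
      have h4 : 0 < K * P := mul_pos hK hP0
      linarith
    rw [expand]
    linarith [step]
end

section
/- Let 0 < η < 1, τ > 0, and let δ : [0,∞) → [0,∞) be continuously differentiable with δ(s) ≤ τ and δ'(s) ≤ η for all s ≥ 0, and let t₀ ≥ 0 satisfy δ(t₀) = t₀. Let φ : ℝ → [0,∞) be continuous and let γ ∈ ℝ. Then for every t ≥ t₀, ∫_{t₀}^{t} (1+s)^{γ−1} φ(s − δ(s)) ds ≤ ( max(1, (1+τ)^{γ−1}) / (1−η) ) ∫_{0}^{t−δ(t)} (1+r)^{γ−1} φ(r) dr. -/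
open Set MeasureTheory

/-!
Put `g s = s - δ s`. Since `g' = 1 - δ' ≥ 1 - η > 0` and `g t₀ = 0`, `g` is increasing and
nonnegative on `[t₀, t]`, and `0 ≤ s - g s = δ s ≤ τ` gives
`(1 + s) ^ (γ - 1) ≤ max 1 ((1 + τ) ^ (γ - 1)) * (1 + g s) ^ (γ - 1)`. Inserting the factor
`g' s / (1 - η) ≥ 1` and substituting `r = g s` gives the estimate.
-/

theorem one_add_rpow_le_max_mul_rpow {u s τ : ℝ} (p : ℝ) (hu : 0 ≤ u) (hus : u ≤ s)
    (hsτ : s ≤ u + τ) : (1 + s) ^ p ≤ max 1 ((1 + τ) ^ p) * (1 + u) ^ p := by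
  have hu1 : 0 < 1 + u := by linarith
  rcases le_or_gt 0 p with hp | hp
  · calc (1 + s) ^ p ≤ ((1 + τ) * (1 + u)) ^ p :=
          Real.rpow_le_rpow (by linarith) (by nlinarith) hp
      _ = (1 + τ) ^ p * (1 + u) ^ p := Real.mul_rpow (by linarith) hu1.le
      _ ≤ max 1 ((1 + τ) ^ p) * (1 + u) ^ p := by gcongr; exact le_max_right _ _
  · calc (1 + s) ^ p ≤ (1 + u) ^ p :=
          Real.rpow_le_rpow_of_nonpos hu1 (by linarith) hp.le
      _ ≤ max 1 ((1 + τ) ^ p) * (1 + u) ^ p :=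
          le_mul_of_one_le_left (Real.rpow_nonneg hu1.le _) (le_max_left _ _)

theorem integral_comp_le_inv_mul_integral_of_le_deriv {a b κ : ℝ} {g g' F : ℝ → ℝ}
    (hab : a ≤ b) (hg : ∀ x ∈ Icc a b, HasDerivAt g (g' x) x)
    (hg' : ContinuousOn g' (Icc a b))
    (hκ : 0 < κ) (hκg' : ∀ x ∈ Icc a b, κ ≤ g' x) (hF : ContinuousOn F (g '' Icc a b))
    (hF₀ : ∀ x ∈ Icc a b, 0 ≤ F (g x)) :
    ∫ x in a..b, F (g x) ≤ κ⁻¹ * ∫ y in g a..g b, F y := by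
  rw [← uIcc_of_le hab] at hg hg' hF
  have hFg : ContinuousOn (F ∘ g) (uIcc a b) :=
    hF.comp (fun x hx ↦ (hg x hx).continuousAt.continuousWithinAt) (mapsTo_image g _)
  rw [← intervalIntegral.integral_comp_mul_deriv' hg hg' hF,
    ← intervalIntegral.integral_const_mul]
  refine intervalIntegral.integral_mono_on hab hFg.intervalIntegrable
    (continuousOn_const.mul (hFg.mul hg')).intervalIntegrable fun x hx ↦ ?_
  have hFgx := hF₀ x hx
  show F (g x) ≤ κ⁻¹ * (F (g x) * g' x)
  calc F (g x) = κ⁻¹ * (F (g x) * κ) := by field_simp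
    _ ≤ κ⁻¹ * (F (g x) * g' x) := by gcongr; exact hκg' x hx

theorem monotoneOn_sub_of_hasDerivAt_le_one {δ δ' : ℝ → ℝ}
    (hδ : ∀ s ∈ Ici (0 : ℝ), HasDerivAt δ (δ' s) s) (hδ' : ∀ s ∈ Ici (0 : ℝ), δ' s ≤ 1) :
    MonotoneOn (fun s ↦ s - δ s) (Ici 0) :=
  monotoneOn_of_hasDerivWithinAt_nonneg (convex_Ici 0)
    (fun s hs ↦ ((hasDerivAt_id s).sub (hδ s hs)).continuousAt.continuousWithinAt)
    (fun s hs ↦ ((hasDerivAt_id s).sub (hδ s (interior_subset hs))).hasDerivWithinAt)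
    fun s hs ↦ sub_nonneg.2 (hδ' s (interior_subset hs))

theorem delay_weighted_change_of_variables_estimate_general
    (η τ : ℝ) (hη1 : η < 1)
    (δ δ' : ℝ → ℝ)
    (hδ_nonneg : ∀ s, 0 ≤ s → 0 ≤ δ s)
    (hδ_le : ∀ s, 0 ≤ s → δ s ≤ τ)
    (hδ_deriv : ∀ s, 0 ≤ s → HasDerivAt δ (δ' s) s)
    (hδ'_cont : ContinuousOn δ' (Ici 0))
    (hδ'_le : ∀ s, 0 ≤ s → δ' s ≤ η)
    (t₀ : ℝ) (ht₀ : 0 ≤ t₀) (hfix : δ t₀ = t₀)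
    (φ : ℝ → ℝ) (hφ_cont : Continuous φ) (hφ_nonneg : ∀ r, 0 ≤ φ r)
    (γ : ℝ) :
    ∀ t, t₀ ≤ t →
      ∫ s in t₀..t, (1 + s) ^ (γ - 1) * φ (s - δ s) ≤
        (max 1 ((1 + τ) ^ (γ - 1)) / (1 - η)) *
          ∫ r in (0 : ℝ)..(t - δ t), (1 + r) ^ (γ - 1) * φ r := by
  intro t ht
  set g : ℝ → ℝ := fun s ↦ s - δ s
  set W : ℝ → ℝ := fun r ↦ (1 + r) ^ (γ - 1) * φ r
  set M := max 1 ((1 + τ) ^ (γ - 1))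
  have hIcc : Icc t₀ t ⊆ Ici 0 := fun s hs ↦ ht₀.trans hs.1
  have hg : ∀ s ∈ Ici (0 : ℝ), HasDerivAt g (1 - δ' s) s := fun s hs ↦
    (hasDerivAt_id s).sub (hδ_deriv s hs)
  have hg_mono : MonotoneOn g (Ici 0) :=
    monotoneOn_sub_of_hasDerivAt_le_one hδ_deriv fun s hs ↦ (hδ'_le s hs).trans hη1.le
  have hg_nonneg : ∀ s ∈ Icc t₀ t, 0 ≤ g s := fun s hs ↦ by
    simpa [g, hfix] using hg_mono (mem_Ici.2 ht₀) (hIcc hs) hs.1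
  have hg_cont : ContinuousOn g (Ici 0) := fun s hs ↦ (hg s hs).continuousAt.continuousWithinAt
  have hpow : ContinuousOn (fun r : ℝ ↦ (1 + r) ^ (γ - 1)) (Ici 0) :=
    (continuousOn_const.add continuousOn_id).rpow_const fun _ hr ↦
      Or.inl (add_pos_of_pos_of_nonneg one_pos hr).ne'
  have hW : ContinuousOn W (Ici 0) := hpow.mul hφ_cont.continuousOn
  have hWg : ContinuousOn (W ∘ g) (Icc t₀ t) := hW.comp (hg_cont.mono hIcc) hg_nonneg
  calc ∫ s in t₀..t, (1 + s) ^ (γ - 1) * φ (s - δ s)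
      ≤ ∫ s in t₀..t, M * W (g s) := by
        refine intervalIntegral.integral_mono_on ht ?_ ?_ fun s hs ↦ ?_
        · exact ((hpow.mono hIcc).mul (hφ_cont.comp_continuousOn (hg_cont.mono hIcc))
            ).intervalIntegrable_of_Icc ht
        · exact (continuousOn_const.mul hWg).intervalIntegrable_of_Icc ht
        · have hs0 := hIcc hs
          have hgs : g s ≤ s := by linarith [hδ_nonneg s hs0]
          have hsg : s ≤ g s + τ := by linarith [hδ_le s hs0]
          exact (mul_le_mul_of_nonneg_right
            (one_add_rpow_le_max_mul_rpow _ (hg_nonneg s hs) hgs hsg) (hφ_nonneg _)).trans_eq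
            (mul_assoc _ _ _)
    _ = M * ∫ s in t₀..t, W (g s) := intervalIntegral.integral_const_mul _ _
    _ ≤ M * ((1 - η)⁻¹ * ∫ r in g t₀..g t, W r) := by
        gcongr
        refine integral_comp_le_inv_mul_integral_of_le_deriv ht (fun s hs ↦ hg s (hIcc hs))
          (continuousOn_const.sub (hδ'_cont.mono hIcc)) (sub_pos.2 hη1)
          (fun s hs ↦ by linarith [hδ'_le s (hIcc hs)])
          (hW.mono (image_subset_iff.2 hg_nonneg)) fun s hs ↦ ?_
        exact mul_nonneg (Real.rpow_nonneg (by linarith [hg_nonneg s hs]) _) (hφ_nonneg _)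
    _ = _ := by simp [g, hfix, div_eq_mul_inv, mul_assoc]

/-- Weighted change-of-variables estimate for a bounded delay `δ ≤ τ`:
`∫_{t₀}^{t} (1+s)^{γ−1} φ(s − δ(s)) ds
  ≤ (max(1,(1+τ)^{γ−1})/(1−η)) ∫_{0}^{t−δ(t)} (1+r)^{γ−1} φ(r) dr`. -/
theorem delay_weighted_change_of_variables_estimate
    (η τ : ℝ) (hη0 : 0 < η) (hη1 : η < 1) (hτ : 0 < τ)
    (δ δ' : ℝ → ℝ)
    (hδ_nonneg : ∀ s, 0 ≤ s → 0 ≤ δ s)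
    (hδ_le : ∀ s, 0 ≤ s → δ s ≤ τ)
    (hδ_deriv : ∀ s, 0 ≤ s → HasDerivAt δ (δ' s) s)
    (hδ'_cont : ContinuousOn δ' (Ici 0))
    (hδ'_le : ∀ s, 0 ≤ s → δ' s ≤ η)
    (t₀ : ℝ) (ht₀ : 0 ≤ t₀) (hfix : δ t₀ = t₀)
    (φ : ℝ → ℝ) (hφ_cont : Continuous φ) (hφ_nonneg : ∀ r, 0 ≤ φ r)
    (γ : ℝ) :
    ∀ t, t₀ ≤ t →
      ∫ s in t₀..t, (1 + s) ^ (γ - 1) * φ (s - δ s) ≤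
        (max 1 ((1 + τ) ^ (γ - 1)) / (1 - η)) *
          ∫ r in (0 : ℝ)..(t - δ t), (1 + r) ^ (γ - 1) * φ r :=
  delay_weighted_change_of_variables_estimate_general η τ hη1 δ δ' hδ_nonneg hδ_le hδ_deriv hδ'_cont
    hδ'_le t₀ ht₀ hfix φ hφ_cont hφ_nonneg γ
end

section
/- Let 0 < η < 1, τ ≥ 0 and λ₁, λ₂ > 0 with λ₁ − λ₂/(1−η) > 0. Then there exists a unique γ₀ > 0 such that γ₀ − λ₁ + λ₂ max(1, (1+τ)^{γ₀−1}) / (1−η) = 0; moreover, for every γ ∈ (0, γ₀), γ − λ₁ + λ₂ max(1, (1+τ)^{γ−1}) / (1−η) ≤ 0. -/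
open Set

/-- For `λ₁ − λ₂/(1−η) > 0` there is a unique `γ₀ > 0` with
`γ₀ − λ₁ + λ₂ max(1,(1+τ)^{γ₀−1})/(1−η) = 0`, and the expression is `≤ 0` on `(0, γ₀)`. -/
theorem stability_exponent_exists_unique
    (η τ lam₁ lam₂ : ℝ) (hη0 : 0 < η) (hη1 : η < 1) (hτ : 0 ≤ τ)
    (hlam₁ : 0 < lam₁) (hlam₂ : 0 < lam₂)
    (hgap : 0 < lam₁ - lam₂ / (1 - η)) :
    (∃! γ₀ : ℝ, 0 < γ₀ ∧ γ₀ - lam₁ + lam₂ * max 1 ((1 + τ) ^ (γ₀ - 1)) / (1 - η) = 0) ∧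
    (∀ γ₀ : ℝ, 0 < γ₀ → γ₀ - lam₁ + lam₂ * max 1 ((1 + τ) ^ (γ₀ - 1)) / (1 - η) = 0 →
      ∀ γ ∈ Ioo (0 : ℝ) γ₀,
        γ - lam₁ + lam₂ * max 1 ((1 + τ) ^ (γ - 1)) / (1 - η) ≤ 0) := by
  set f : ℝ → ℝ := fun γ => γ - lam₁ + lam₂ * max 1 ((1 + τ) ^ (γ - 1)) / (1 - η) with hf
  have hη : (0:ℝ) < 1 - η := by linarith
  have hb : (1:ℝ) ≤ 1 + τ := by linarith
  have hbpos : (0:ℝ) < 1 + τ := by linarith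
  -- strict monotonicity
  have hmono : StrictMono f := by
    have h1 : Monotone fun γ : ℝ => lam₂ * max 1 ((1 + τ) ^ (γ - 1)) / (1 - η) := by
      intro x y hxy
      have : (1 + τ) ^ (x - 1) ≤ (1 + τ) ^ (y - 1) :=
        Real.rpow_le_rpow_of_exponent_le hb (by linarith)
      have hmax : max 1 ((1 + τ) ^ (x - 1)) ≤ max 1 ((1 + τ) ^ (y - 1)) :=
        max_le_max le_rfl this
      have := mul_le_mul_of_nonneg_left hmax hlam₂.le
      exact (div_le_div_iff_of_pos_right hη).mpr this
    intro x y hxy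
    have := h1 hxy.le
    simp only [hf]
    linarith
  -- continuity
  have hcont : Continuous f := by
    have : Continuous fun γ : ℝ => (1 + τ) ^ (γ - 1) := by
      have : (fun γ : ℝ => (1 + τ) ^ (γ - 1)) =
          fun γ : ℝ => Real.exp ((γ - 1) * Real.log (1 + τ)) := by
        funext γ
        rw [Real.rpow_def_of_pos hbpos, mul_comm]
      rw [this]
      exact Real.continuous_exp.comp ((continuous_id.sub continuous_const).mul continuous_const)
    exact ((continuous_id.sub continuous_const).add
      (((continuous_const.mul ((continuous_const).max this))).div_const _))
  -- f 0 < 0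
  have hf0 : f 0 < 0 := by
    have hle : (1 + τ) ^ ((0:ℝ) - 1) ≤ 1 :=
      Real.rpow_le_one_of_one_le_of_nonpos hb (by norm_num)
    have hmax : max 1 ((1 + τ) ^ ((0:ℝ) - 1)) = 1 := max_eq_left hle
    simp only [hf]
    rw [hmax]
    rw [mul_one]
    linarith
  -- f lam₁ > 0
  have hf1 : 0 < f lam₁ := by
    have hmax : (1:ℝ) ≤ max 1 ((1 + τ) ^ (lam₁ - 1)) := le_max_left _ _
    have : 0 < lam₂ * max 1 ((1 + τ) ^ (lam₁ - 1)) / (1 - η) :=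
      div_pos (mul_pos hlam₂ (lt_of_lt_of_le one_pos hmax)) hη
    simp only [hf]
    linarith
  -- IVT
  obtain ⟨γ₀, hγ₀mem, hγ₀⟩ : ∃ γ₀ ∈ Icc (0:ℝ) lam₁, f γ₀ = 0 := by
    have := intermediate_value_Icc hlam₁.le hcont.continuousOn
    exact this ⟨hf0.le, hf1.le⟩
  have hγ₀pos : 0 < γ₀ := by
    by_contra h
    push_neg at h
    have := hmono.le_iff_le.mpr h
    rw [hγ₀] at this
    linarith
  constructor
  · refine ⟨γ₀, ⟨hγ₀pos, hγ₀⟩, ?_⟩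
    rintro y ⟨-, hy⟩
    exact hmono.injective (hy.trans hγ₀.symm)
  · rintro γ₁ hγ₁pos hγ₁ γ ⟨-, hγlt⟩
    have h := hmono hγlt
    have h0 : f γ₁ = 0 := hγ₁
    have : f γ ≤ 0 := by linarith
    exact this
end
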